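/- Let X₁, X₂, ... be iid 1-subgaussian random variables and Sₙ = X₁ + ... + Xₙ. Then for h(t,x) = (1-α²) ∫₀^∞ exp(ax - a²t/2) da (with any constant factor (1-α²) > 0), the process (h(t+n, x+Sₙ))ₙ is a supermartingale for every t > 0, x ∈ ℝ; in particular E[h(t+1, x+X₁)] ≤ h(t,x). -/

import Mathlib

/-!
For every `a`, `exp (a y - a² s / 2)` is a space-time supermartingale along the walk, since
`E exp (a X) ≤ exp (a² / 2)`; `h` is a positive mixture over `a > 0` of these functions, and
Tonelli's theorem exchanges the mixture with the expectation. Working with `ℝ≥0∞`-valued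
integrals makes this exchange unconditional.
-/

open MeasureTheory Real ProbabilityTheory
open Set ENNReal

noncomputable def expMixture (s y : ℝ) : ℝ :=
  ∫ a in Ioi (0 : ℝ), exp (a * y - a ^ 2 * s / 2)

/-- The moment generating function as an `ℝ≥0∞`-valued integral: unlike `mgf`, it records an
infinite exponential moment as `⊤` instead of the junk value `0`. -/
noncomputable def expMoment {Ω : Type*} [MeasurableSpace Ω] (μ : Measure Ω) (Z : Ω → ℝ)
    (a : ℝ) : ℝ≥0∞ :=
  ∫⁻ ω, ENNReal.ofReal (exp (a * Z ω)) ∂μ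

section ExpMixture

variable {s : ℝ}

lemma integrable_exp_mul_sub_sq_mul (hs : 0 < s) (y : ℝ) :
    Integrable (fun a : ℝ => exp (a * y - a ^ 2 * s / 2)) := by
  have hgauss := ((integrable_exp_neg_mul_sq (b := s / 2) (by positivity)).comp_sub_right
    (y / s)).const_mul (exp (y ^ 2 / (2 * s)))
  refine hgauss.congr (Filter.Eventually.of_forall fun a => ?_)
  simp only [← exp_add]
  congr 1
  field_simp
  ring

lemma expMixture_nonneg (s y : ℝ) : 0 ≤ expMixture s y :=
  integral_nonneg fun _ => (exp_pos _).le

lemma measurable_expMixture (s : ℝ) : Measurable (expMixture s) := by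
  have hcont : Continuous fun p : ℝ × ℝ => exp (p.2 * p.1 - p.2 ^ 2 * s / 2) := by fun_prop
  exact (hcont.stronglyMeasurable.integral_prod_right'
    (ν := volume.restrict (Ioi (0 : ℝ)))).measurable

lemma ofReal_expMixture (hs : 0 < s) (y : ℝ) :
    ENNReal.ofReal (expMixture s y)
      = ∫⁻ a in Ioi (0 : ℝ), ENNReal.ofReal (exp (a * y - a ^ 2 * s / 2)) :=
  ofReal_integral_eq_lintegral_ofReal (integrable_exp_mul_sub_sq_mul hs y).integrableOn
    (Filter.Eventually.of_forall fun _ => (exp_pos _).le)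

lemma lintegral_ofReal_expMixture {Ω : Type*} [MeasurableSpace Ω] (μ : Measure Ω) [SFinite μ]
    (hs : 0 < s) {Z : Ω → ℝ} (hZ : Measurable Z) (x : ℝ) :
    ∫⁻ ω, ENNReal.ofReal (expMixture s (x + Z ω)) ∂μ
      = ∫⁻ a in Ioi (0 : ℝ), ENNReal.ofReal (exp (a * x - a ^ 2 * s / 2)) * expMoment μ Z a := by
  have hF : Measurable fun p : Ω × ℝ =>
      ENNReal.ofReal (exp (p.2 * (x + Z p.1) - p.2 ^ 2 * s / 2)) := by
    fun_prop
  simp_rw [ofReal_expMixture hs]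
  rw [lintegral_lintegral_swap hF.aemeasurable]
  refine lintegral_congr fun a => ?_
  rw [expMoment, ← lintegral_const_mul _ (by fun_prop)]
  refine lintegral_congr fun ω => ?_
  rw [← ENNReal.ofReal_mul (exp_pos _).le, ← exp_add]
  ring_nf

end ExpMixture

section ExpMoment

variable {Ω : Type*} [MeasurableSpace Ω] {μ : Measure Ω} {Z : Ω → ℝ} {a : ℝ}

lemma expMoment_pos [NeZero μ] (hZ : Measurable Z) (a : ℝ) : 0 < expMoment μ Z a := by
  rw [expMoment, lintegral_pos_iff_support (by fun_prop)]
  simp [Function.support, exp_pos, NeZero.ne μ]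

lemma expMoment_eq_top_of_le [IsFiniteMeasure μ] {a₀ : ℝ} (ha₀ : 0 ≤ a₀)
    (hle : a₀ ≤ a) (htop : expMoment μ Z a₀ = ⊤) : expMoment μ Z a = ⊤ := by
  have hpt : ∀ z : ℝ, ENNReal.ofReal (exp (a₀ * z)) ≤ ENNReal.ofReal (exp (a * z)) + 1 := by
    intro z
    rw [← ENNReal.ofReal_one, ← ENNReal.ofReal_add (exp_pos _).le zero_le_one]
    refine ENNReal.ofReal_le_ofReal ?_
    rcases le_total 0 z with hz | hz
    · linarith [exp_le_exp.2 (mul_le_mul_of_nonneg_right hle hz)]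
    · linarith [exp_le_one_iff.2 (mul_nonpos_of_nonneg_of_nonpos ha₀ hz), exp_pos (a * z)]
  have hmono : expMoment μ Z a₀ ≤ expMoment μ Z a + μ univ := by
    calc expMoment μ Z a₀ ≤ ∫⁻ ω, ENNReal.ofReal (exp (a * Z ω)) + 1 ∂μ :=
          lintegral_mono fun ω => hpt (Z ω)
      _ = expMoment μ Z a + μ univ := by
          rw [lintegral_add_right _ measurable_const, lintegral_one, expMoment]
  rw [htop, top_le_iff] at hmono
  exact (ENNReal.add_eq_top.1 hmono).resolve_right (measure_ne_top μ univ)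

lemma expMoment_le_ofReal (hZ : Measurable Z) (hfin : expMoment μ Z a ≠ ⊤) {c : ℝ}
    (hle : ∫ ω, exp (a * Z ω) ∂μ ≤ c) : expMoment μ Z a ≤ ENNReal.ofReal c := by
  have hintegral : ∫ ω, exp (a * Z ω) ∂μ = (expMoment μ Z a).toReal :=
    integral_eq_lintegral_of_nonneg_ae (Filter.Eventually.of_forall fun _ => (exp_pos _).le)
      (by fun_prop)
  rw [← ENNReal.ofReal_toReal hfin, ← hintegral]
  exact ENNReal.ofReal_le_ofReal hle

lemma expMoment_sum {ι : Type*} {X : ι → Ω → ℝ} (hmeas : ∀ i, Measurable (X i))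
    (hindep : iIndepFun X μ) (s : Finset ι) (a : ℝ) :
    expMoment μ (fun ω => ∑ i ∈ s, X i ω) a = ∏ i ∈ s, expMoment μ (X i) a := by
  have hexp : iIndepFun (fun i ω => ENNReal.ofReal (exp (a * X i ω))) μ :=
    hindep.comp (fun _ z => ENNReal.ofReal (exp (a * z))) fun _ => by fun_prop
  simp only [expMoment]
  rw [← lintegral_prod_eq_prod_lintegral_of_indepFun s _ hexp fun i => by fun_prop]
  refine lintegral_congr fun ω => ?_
  rw [Finset.mul_sum, exp_sum, ENNReal.ofReal_prod_of_nonneg fun _ _ => (exp_pos _).le]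

end ExpMoment

section RandomWalk

variable {Ω : Type*} [MeasurableSpace Ω] {μ : Measure Ω} [IsProbabilityMeasure μ]
  {X : ℕ → Ω → ℝ}

lemma lintegral_expMixture_walk_succ_le (hmeas : ∀ i, Measurable (X i))
    (hindep : iIndepFun X μ) {s : ℝ} (hs : 0 < s) (x : ℝ) {n : ℕ}
    (hXn : ∀ a > 0, expMoment μ (X n) a ≤ ENNReal.ofReal (exp (a ^ 2 / 2))) :
    ∫⁻ ω, ENNReal.ofReal (expMixture (s + 1) (x + ∑ i ∈ Finset.range (n + 1), X i ω)) ∂μ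
      ≤ ∫⁻ ω, ENNReal.ofReal (expMixture s (x + ∑ i ∈ Finset.range n, X i ω)) ∂μ := by
  rw [lintegral_ofReal_expMixture μ (by linarith) (by fun_prop),
    lintegral_ofReal_expMixture μ hs (by fun_prop)]
  refine setLIntegral_mono' measurableSet_Ioi fun a ha => ?_
  rw [expMoment_sum hmeas hindep, expMoment_sum hmeas hindep, Finset.prod_range_succ]
  set P := ∏ i ∈ Finset.range n, expMoment μ (X i) a
  calc ENNReal.ofReal (exp (a * x - a ^ 2 * (s + 1) / 2)) * (P * expMoment μ (X n) a)
      ≤ ENNReal.ofReal (exp (a * x - a ^ 2 * (s + 1) / 2))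
          * (P * ENNReal.ofReal (exp (a ^ 2 / 2))) := by
        gcongr
        exact hXn a ha
    _ = ENNReal.ofReal (exp (a * x - a ^ 2 * s / 2)) * P := by
        rw [mul_comm P, ← mul_assoc, ← ENNReal.ofReal_mul (exp_pos _).le, ← exp_add]
        ring_nf

lemma lintegral_expMixture_walk_le (hmeas : ∀ i, Measurable (X i)) (hindep : iIndepFun X μ)
    {t : ℝ} (ht : 0 < t) (x : ℝ) {n : ℕ}
    (hX : ∀ i < n, ∀ a > 0, expMoment μ (X i) a ≤ ENNReal.ofReal (exp (a ^ 2 / 2))) :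
    ∫⁻ ω, ENNReal.ofReal (expMixture (t + n) (x + ∑ i ∈ Finset.range n, X i ω)) ∂μ
      ≤ ENNReal.ofReal (expMixture t x) := by
  induction n with
  | zero => simp
  | succ n ih =>
    rw [Nat.cast_succ, ← add_assoc]
    exact (lintegral_expMixture_walk_succ_le hmeas hindep (by positivity) x
      (hX n n.lt_succ_self)).trans (ih fun i hi => hX i (hi.trans n.lt_succ_self))

lemma lintegral_expMixture_walk_eq_top (hmeas : ∀ i, Measurable (X i))
    (hindep : iIndepFun X μ) {s : ℝ} (hs : 0 < s) (x : ℝ) {n j : ℕ} (hj : j < n) {a₀ : ℝ}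
    (ha₀ : 0 < a₀) (htop : expMoment μ (X j) a₀ = ⊤) :
    ∫⁻ ω, ENNReal.ofReal (expMixture s (x + ∑ i ∈ Finset.range n, X i ω)) ∂μ = ⊤ := by
  have hprod : ∀ a ≥ a₀, ∏ i ∈ Finset.range n, expMoment μ (X i) a = ⊤ := fun a ha => by
    rw [← Finset.mul_prod_erase _ _ (Finset.mem_range.2 hj),
      expMoment_eq_top_of_le ha₀.le ha htop]
    exact ENNReal.top_mul (Finset.prod_ne_zero_iff.2 fun i _ => (expMoment_pos (hmeas i) a).ne')
  rw [lintegral_ofReal_expMixture μ hs (by fun_prop), ← top_le_iff]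
  calc ⊤ = ∫⁻ _ in Ici a₀, ⊤ := by rw [setLIntegral_const, Real.volume_Ici, top_mul_top]
    _ ≤ ∫⁻ a in Ici a₀, ENNReal.ofReal (exp (a * x - a ^ 2 * s / 2))
          * expMoment μ (fun ω => ∑ i ∈ Finset.range n, X i ω) a :=
        setLIntegral_mono' measurableSet_Ici fun a ha => by
          rw [expMoment_sum hmeas hindep, hprod a ha,
            ENNReal.mul_top (ENNReal.ofReal_pos.2 (exp_pos _)).ne']
    _ ≤ _ := lintegral_mono_set (Ici_subset_Ioi.2 ha₀)

theorem integral_expMixture_walk_succ_le (hmeas : ∀ i, Measurable (X i))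
    (hindep : iIndepFun X μ) (hsg : ∀ i, ∀ a : ℝ, ∫ ω, exp (a * X i ω) ∂μ ≤ exp (a ^ 2 / 2))
    {t : ℝ} (ht : 0 < t) (x : ℝ) (n : ℕ) :
    ∫ ω, expMixture (t + (n + 1 : ℕ)) (x + ∑ i ∈ Finset.range (n + 1), X i ω) ∂μ
      ≤ ∫ ω, expMixture (t + n) (x + ∑ i ∈ Finset.range n, X i ω) ∂μ := by
  have htoReal : ∀ s m, ∫ ω, expMixture s (x + ∑ i ∈ Finset.range m, X i ω) ∂μ
      = (∫⁻ ω, ENNReal.ofReal (expMixture s (x + ∑ i ∈ Finset.range m, X i ω)) ∂μ).toReal :=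
    fun s m => integral_eq_lintegral_of_nonneg_ae
      (Filter.Eventually.of_forall fun _ => expMixture_nonneg _ _)
      ((measurable_expMixture s).comp (by fun_prop)).aestronglyMeasurable
  rw [htoReal, htoReal]
  by_cases hfin : ∀ i ≤ n, ∀ a > 0, expMoment μ (X i) a ≠ ⊤
  · have hX : ∀ i ≤ n, ∀ a > 0, expMoment μ (X i) a ≤ ENNReal.ofReal (exp (a ^ 2 / 2)) :=
      fun i hi a ha => expMoment_le_ofReal (hmeas i) (hfin i hi a ha) (hsg i a)
    refine ENNReal.toReal_mono (ne_top_of_le_ne_top ofReal_ne_top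
      (lintegral_expMixture_walk_le hmeas hindep ht x fun i hi => hX i hi.le)) ?_
    rw [Nat.cast_succ, ← add_assoc]
    exact lintegral_expMixture_walk_succ_le hmeas hindep (by positivity) x (hX n le_rfl)
  · -- an infinite exponential moment makes the left integral the junk value `0`
    push Not at hfin
    obtain ⟨j, hj, a₀, ha₀, htop⟩ := hfin
    rw [lintegral_expMixture_walk_eq_top hmeas hindep (by positivity) x (Nat.lt_succ_of_le hj)
      ha₀ htop, toReal_top]
    exact toReal_nonneg

end RandomWalk

theorem h_superharmonic_for_subgaussian_walk {Ω : Type*} [MeasurableSpace Ω]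
    (μ : Measure Ω) [IsProbabilityMeasure μ] (X : ℕ → Ω → ℝ)
    (hmeas : ∀ i, Measurable (X i))
    (hindep : iIndepFun X μ)
    (hsg : ∀ i, ∀ a : ℝ, ∫ ω, Real.exp (a * X i ω) ∂μ ≤ Real.exp (a ^ 2 / 2))
    (α : ℝ) (hα : 0 < 1 - α ^ 2) (h : ℝ → ℝ → ℝ)
    (hh : ∀ t x, h t x = (1 - α ^ 2) * ∫ a in Set.Ioi (0 : ℝ), Real.exp (a * x - a ^ 2 * t / 2)) :
    ∀ (t x : ℝ), 0 < t →
      (∀ n : ℕ,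
        ∫ ω, h (t + (n + 1 : ℕ)) (x + ∑ i ∈ Finset.range (n + 1), X i ω) ∂μ
          ≤ ∫ ω, h (t + n) (x + ∑ i ∈ Finset.range n, X i ω) ∂μ) ∧
      ∫ ω, h (t + 1) (x + X 0 ω) ∂μ ≤ h t x := by
  intro t x ht
  obtain rfl : h = fun s y => (1 - α ^ 2) * expMixture s y := funext₂ hh
  have hstep : ∀ n : ℕ,
      ∫ ω, (1 - α ^ 2) * expMixture (t + (n + 1 : ℕ)) (x + ∑ i ∈ Finset.range (n + 1), X i ω) ∂μ
        ≤ ∫ ω, (1 - α ^ 2) * expMixture (t + n) (x + ∑ i ∈ Finset.range n, X i ω) ∂μ :=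
    fun n => by
      simp only [integral_const_mul]
      exact mul_le_mul_of_nonneg_left (integral_expMixture_walk_succ_le hmeas hindep hsg ht x n)
        hα.le
  exact ⟨hstep, by simpa using hstep 0⟩
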